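/- Fix n ≥ 2 and B ≥ 0. The following two statements are equivalent: (1) for every complex n × 2 matrix A with orthonormal columns there exist indices i ≠ j such that the 2 × 2 submatrix of A formed by rows i and j has smallest singular value at least B; (2) for every family of vectors a₁, …, a_n ∈ ℝ³ with ∑ a_i = 0 and ∑ ‖a_i‖ = 1 there exist indices i ≠ j such that ‖a_i‖ + ‖a_j‖ − ‖a_i + a_j‖ ≥ B². -/

import Mathlib

/-!
Apply the (halved) Hopf map `(u, v) ↦ (conj u · v, (|u|² - |v|²)/2)` to each row of `A`. The
entries of `AᴴA` are linear combinations of the coordinates and lengths of the resulting vectors,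
so `A` has orthonormal columns exactly when they form a closed polygon of perimeter one, and
every such polygon arises this way because the Hopf map is onto. For the `2 × 2` submatrix `M`
on rows `i, j`, the eigenvalues of `MᴴM` are `p ± s` with `2p = ‖M‖²_F = 2(‖aᵢ‖ + ‖aⱼ‖)` and
`s² = p² - |det M|² = ‖aᵢ + aⱼ‖²`, so `σ_min(M)² = ‖aᵢ‖ + ‖aⱼ‖ - ‖aᵢ + aⱼ‖`.
-/

open Matrix Complex ComplexConjugate

theorem EuclideanSpace.norm_sq_eq_fin_three (a : EuclideanSpace ℝ (Fin 3)) :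
    ‖a‖ ^ 2 = a 0 ^ 2 + a 1 ^ 2 + a 2 ^ 2 := by
  simp [EuclideanSpace.norm_sq_eq, Fin.sum_univ_three]

/-- Half of the Hopf map `H` of the paper, so that `‖hopf u v‖ = (‖u‖² + ‖v‖²) / 2`. -/
noncomputable def hopf (u v : ℂ) : EuclideanSpace ℝ (Fin 3) :=
  !₂[(conj u * v).re, -(conj u * v).im, (‖u‖ ^ 2 - ‖v‖ ^ 2) / 2]

@[simp] theorem hopf_apply_zero (u v : ℂ) : hopf u v 0 = (conj u * v).re := rfl

@[simp] theorem hopf_apply_one (u v : ℂ) : hopf u v 1 = -(conj u * v).im := rfl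

@[simp] theorem hopf_apply_two (u v : ℂ) : hopf u v 2 = (‖u‖ ^ 2 - ‖v‖ ^ 2) / 2 := rfl

theorem norm_hopf (u v : ℂ) : ‖hopf u v‖ = (‖u‖ ^ 2 + ‖v‖ ^ 2) / 2 := by
  refine (pow_left_inj₀ (norm_nonneg _) (by positivity) two_ne_zero).1 ?_
  simp only [EuclideanSpace.norm_sq_eq_fin_three, hopf_apply_zero, hopf_apply_one,
    hopf_apply_two, Complex.sq_norm, normSq_apply, mul_re, mul_im, conj_re, conj_im]
  ring

theorem norm_hopf_add_hopf_sq (u₁ v₁ u₂ v₂ : ℂ) :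
    ‖hopf u₁ v₁ + hopf u₂ v₂‖ ^ 2
      = (‖hopf u₁ v₁‖ + ‖hopf u₂ v₂‖) ^ 2 - ‖u₁ * v₂ - u₂ * v₁‖ ^ 2 := by
  simp only [EuclideanSpace.norm_sq_eq_fin_three, norm_hopf, PiLp.add_apply, hopf_apply_zero,
    hopf_apply_one, hopf_apply_two, Complex.sq_norm, normSq_apply, mul_re, mul_im, conj_re,
    conj_im, sub_re, sub_im]
  ring

theorem hopf_eq_iff {u v : ℂ} {a : EuclideanSpace ℝ (Fin 3)} :
    hopf u v = a ↔ conj u * v = ⟨a 0, -a 1⟩ ∧ ‖u‖ ^ 2 - ‖v‖ ^ 2 = 2 * a 2 := by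
  rw [← (EuclideanSpace.equiv (Fin 3) ℝ).injective.eq_iff, funext_iff, Fin.forall_fin_succ,
    Fin.forall_fin_succ, Fin.forall_fin_one, Complex.ext_iff]
  simp only [PiLp.continuousLinearEquiv_apply, Fin.succ_zero_eq_one, Fin.succ_one_eq_two,
    hopf_apply_zero, hopf_apply_one, hopf_apply_two]
  constructor
  · rintro ⟨h0, h1, h2⟩; exact ⟨⟨h0, by linarith⟩, by linarith⟩
  · rintro ⟨⟨h0, h1⟩, h2⟩; exact ⟨h0, by linarith, by linarith⟩

theorem exists_hopf_eq (a : EuclideanSpace ℝ (Fin 3)) : ∃ u v : ℂ, hopf u v = a := by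
  have hr := EuclideanSpace.norm_sq_eq_fin_three a
  have hz : |a 2| ≤ ‖a‖ := by
    nlinarith [sq_nonneg (a 0), sq_nonneg (a 1), abs_nonneg (a 2), norm_nonneg a, sq_abs (a 2)]
  obtain ⟨hplus, hminus⟩ : 0 ≤ ‖a‖ + a 2 ∧ 0 ≤ ‖a‖ - a 2 := by
    constructor <;> linarith [abs_le.mp hz]
  simp_rw [hopf_eq_iff]
  rcases hplus.eq_or_lt with hzero | hpos
  · refine ⟨0, √(‖a‖ - a 2), ?_, ?_⟩
    · have : a 0 = 0 ∧ a 1 = 0 := by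
        constructor <;> nlinarith [sq_nonneg (a 0), sq_nonneg (a 1)]
      simp only [map_zero, zero_mul, this, neg_zero]; rfl
    · rw [norm_zero, Complex.norm_real, Real.norm_eq_abs, sq_abs, Real.sq_sqrt hminus]
      linarith
  · have ht : (√(‖a‖ + a 2) : ℂ) ≠ 0 := by simpa using Real.sqrt_ne_zero'.mpr hpos
    refine ⟨√(‖a‖ + a 2), ⟨a 0, -a 1⟩ / √(‖a‖ + a 2), ?_, ?_⟩
    · rw [Complex.conj_ofReal]; field_simp
    · rw [norm_div, Complex.norm_real, Real.norm_eq_abs, abs_of_nonneg (Real.sqrt_nonneg _),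
        div_pow, Real.sq_sqrt hpos.le, Complex.sq_norm, normSq_mk]
      field_simp
      nlinarith

section Columns

variable {ι : Type*} [Fintype ι]

theorem sum_hopf_eq_zero_iff (u v : ι → ℂ) :
    ∑ i, hopf (u i) (v i) = 0 ↔ ∑ i, conj (u i) * v i = 0 ∧ ∑ i, ‖u i‖ ^ 2 = ∑ i, ‖v i‖ ^ 2 := by
  rw [← (EuclideanSpace.equiv (Fin 3) ℝ).injective.eq_iff, funext_iff, Fin.forall_fin_succ,
    Fin.forall_fin_succ, Fin.forall_fin_one, Complex.ext_iff]
  simp only [PiLp.continuousLinearEquiv_apply, WithLp.ofLp_sum, Finset.sum_apply, PiLp.zero_apply,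
    Fin.succ_zero_eq_one, Fin.succ_one_eq_two, hopf_apply_zero, hopf_apply_one, hopf_apply_two,
    Finset.sum_neg_distrib, neg_eq_zero, ← re_sum, ← im_sum, zero_re, zero_im, ← Finset.sum_div,
    div_eq_zero_iff, two_ne_zero, or_false, Finset.sum_sub_distrib, sub_eq_zero, and_assoc]

theorem sum_norm_hopf (u v : ι → ℂ) :
    ∑ i, ‖hopf (u i) (v i)‖ = (∑ i, ‖u i‖ ^ 2 + ∑ i, ‖v i‖ ^ 2) / 2 := by
  simp only [norm_hopf, ← Finset.sum_div, Finset.sum_add_distrib]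

theorem Matrix.conjTranspose_mul_self_eq_one_iff_of_fin_two (A : Matrix ι (Fin 2) ℂ) :
    Aᴴ * A = 1 ↔
      ∑ i, ‖A i 0‖ ^ 2 = 1 ∧ ∑ i, ‖A i 1‖ ^ 2 = 1 ∧ ∑ i, conj (A i 0) * A i 1 = 0 := by
  have hdiag (k : Fin 2) : ∑ i, conj (A i k) * A i k = 1 ↔ ∑ i, ‖A i k‖ ^ 2 = 1 := by
    simp_rw [conj_mul']; norm_cast
  have hoff : ∑ i, conj (A i 1) * A i 0 = 0 ↔ ∑ i, conj (A i 0) * A i 1 = 0 := by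
    rw [← map_eq_zero (starRingEnd ℂ), map_sum]
    simp only [map_mul, conj_conj, mul_comm]
  rw [← Matrix.ext_iff]
  simp only [Fin.forall_fin_two, mul_apply, conjTranspose_apply, one_apply, RCLike.star_def]
  simp only [Fin.isValue, ↓reduceIte, one_ne_zero, zero_ne_one, hdiag, hoff]
  tauto

theorem Matrix.conjTranspose_mul_self_eq_one_iff_hopf (A : Matrix ι (Fin 2) ℂ) :
    Aᴴ * A = 1 ↔ ∑ i, hopf (A i 0) (A i 1) = 0 ∧ ∑ i, ‖hopf (A i 0) (A i 1)‖ = 1 := by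
  rw [conjTranspose_mul_self_eq_one_iff_of_fin_two, sum_hopf_eq_zero_iff, sum_norm_hopf]
  constructor
  · rintro ⟨h0, h1, h01⟩
    exact ⟨⟨h01, h0.trans h1.symm⟩, by rw [h0, h1]; norm_num⟩
  · rintro ⟨⟨h01, heq⟩, hsum⟩
    exact ⟨by linarith, by linarith, h01⟩

end Columns

theorem Complex.lagrange_identity (a b c d : ℂ) :
    (‖a‖ ^ 2 + ‖b‖ ^ 2) * (‖c‖ ^ 2 + ‖d‖ ^ 2)
      = ‖a * d - b * c‖ ^ 2 + ‖conj a * c + conj b * d‖ ^ 2 := by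
  simp only [Complex.sq_norm, normSq_apply, add_re, add_im, sub_re, sub_im, mul_re, mul_im,
    conj_re, conj_im]
  ring

section TwoByTwo

variable {u₁ v₁ u₂ v₂ : ℂ} {p s : ℝ}

theorem sub_le_norm_sq_add_norm_sq (hs : 0 ≤ s)
    (hp : 2 * p = ‖u₁‖ ^ 2 + ‖v₁‖ ^ 2 + ‖u₂‖ ^ 2 + ‖v₂‖ ^ 2)
    (hd : s ^ 2 = p ^ 2 - ‖u₁ * v₂ - u₂ * v₁‖ ^ 2) {x y : ℂ} (hxy : ‖x‖ ^ 2 + ‖y‖ ^ 2 = 1) :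
    p - s ≤ ‖u₁ * x + v₁ * y‖ ^ 2 + ‖u₂ * x + v₂ * y‖ ^ 2 := by
  -- `(c₁, c₂)` and `(d₁, d₂)` are the images under `M = !![u₁, v₁; u₂, v₂]` of the orthonormal
  -- basis `(x, y)`, `(-conj y, conj x)`.
  set c₁ := u₁ * x + v₁ * y
  set c₂ := u₂ * x + v₂ * y
  set d₁ := -u₁ * conj y + v₁ * conj x
  set d₂ := -u₂ * conj y + v₂ * conj x
  have hfrob : ‖c₁‖ ^ 2 + ‖c₂‖ ^ 2 + (‖d₁‖ ^ 2 + ‖d₂‖ ^ 2) = 2 * p := by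
    rw [hp, ← mul_one (_ + ‖v₂‖ ^ 2), ← hxy]
    simp only [c₁, c₂, d₁, d₂, Complex.sq_norm, normSq_apply, add_re, add_im, mul_re, mul_im,
      neg_re, neg_im, conj_re, conj_im]
    ring
  have hdet : ‖c₁ * d₂ - c₂ * d₁‖ = ‖u₁ * v₂ - u₂ * v₁‖ := by
    have : c₁ * d₂ - c₂ * d₁ = (u₁ * v₂ - u₂ * v₁) * (x * conj x + y * conj y) := by
      simp only [c₁, c₂, d₁, d₂]; ring
    rw [this, mul_conj', mul_conj', ← ofReal_pow, ← ofReal_pow, ← ofReal_add, hxy, ofReal_one,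
      mul_one]
  have hprod : p ^ 2 - s ^ 2 ≤ (‖c₁‖ ^ 2 + ‖c₂‖ ^ 2) * (‖d₁‖ ^ 2 + ‖d₂‖ ^ 2) := by
    rw [Complex.lagrange_identity, hdet]
    nlinarith [sq_nonneg ‖conj c₁ * d₁ + conj c₂ * d₂‖]
  nlinarith [sq_nonneg (‖c₁‖ ^ 2 + ‖c₂‖ ^ 2 - p)]

theorem exists_norm_sq_add_norm_sq_eq_sub
    (hp : 2 * p = ‖u₁‖ ^ 2 + ‖v₁‖ ^ 2 + ‖u₂‖ ^ 2 + ‖v₂‖ ^ 2)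
    (hd : s ^ 2 = p ^ 2 - ‖u₁ * v₂ - u₂ * v₁‖ ^ 2) :
    ∃ x y : ℂ, ‖x‖ ^ 2 + ‖y‖ ^ 2 = 1 ∧
      ‖u₁ * x + v₁ * y‖ ^ 2 + ‖u₂ * x + v₂ * y‖ ^ 2 = p - s := by
  -- `(β, -α)` is an eigenvector of `MᴴM = !![‖u‖², β; conj β, ‖v‖²]` for the eigenvalue `p - s`.
  set β := conj u₁ * v₁ + conj u₂ * v₂
  set α := ‖u₁‖ ^ 2 + ‖u₂‖ ^ 2 - (p - s) with hα
  have hαγ : α * (‖v₁‖ ^ 2 + ‖v₂‖ ^ 2 - (p - s)) = ‖β‖ ^ 2 := by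
    linear_combination Complex.lagrange_identity u₁ u₂ v₁ v₂ + hd + (p - s) * hp
  have hexp : ‖u₁ * β - v₁ * α‖ ^ 2 + ‖u₂ * β - v₂ * α‖ ^ 2
      = (‖u₁‖ ^ 2 + ‖u₂‖ ^ 2) * ‖β‖ ^ 2 + (‖v₁‖ ^ 2 + ‖v₂‖ ^ 2) * α ^ 2 - 2 * α * ‖β‖ ^ 2 := by
    simp only [β, Complex.sq_norm, normSq_apply, add_re, add_im, sub_re, sub_im, mul_re, mul_im,
      conj_re, conj_im, ofReal_re, ofReal_im]
    ring
  have heigen : ‖u₁ * β - v₁ * α‖ ^ 2 + ‖u₂ * β - v₂ * α‖ ^ 2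
      = (p - s) * (‖β‖ ^ 2 + α ^ 2) := by
    linear_combination hexp + α * hαγ - ‖β‖ ^ 2 * hα
  rcases (add_nonneg (sq_nonneg ‖β‖) (sq_nonneg α)).eq_or_lt with h0 | hpos
  · have hα0 : α = 0 := by nlinarith [sq_nonneg ‖β‖, sq_nonneg α]
    refine ⟨1, 0, by simp, ?_⟩
    simp only [mul_one, mul_zero, add_zero]
    linarith
  · set t := √(‖β‖ ^ 2 + α ^ 2)
    have ht : t ^ 2 = ‖β‖ ^ 2 + α ^ 2 := Real.sq_sqrt hpos.le
    have ht0 : (t : ℂ) ≠ 0 := by simpa [t] using Real.sqrt_ne_zero'.mpr hpos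
    refine ⟨β / t, -α / t, ?_, ?_⟩
    · simp only [norm_div, norm_neg, Complex.norm_real, Real.norm_eq_abs, div_pow, sq_abs, ht]
      rw [← add_div, div_self hpos.ne']
    · have hcol (u v : ℂ) : u * (β / t) + v * (-α / t) = (u * β - v * α) / t := by ring
      simp only [hcol, norm_div, Complex.norm_real, Real.norm_eq_abs, div_pow, sq_abs, ht,
        ← add_div, heigen]
      exact mul_div_cancel_right₀ _ hpos.ne'

end TwoByTwo

theorem forall_le_norm_sq_add_norm_sq_iff {u₁ v₁ u₂ v₂ : ℂ} {c : ℝ} :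
    (∀ x y : ℂ, ‖x‖ ^ 2 + ‖y‖ ^ 2 = 1 → c ≤ ‖u₁ * x + v₁ * y‖ ^ 2 + ‖u₂ * x + v₂ * y‖ ^ 2) ↔
      c ≤ ‖hopf u₁ v₁‖ + ‖hopf u₂ v₂‖ - ‖hopf u₁ v₁ + hopf u₂ v₂‖ := by
  have hp : 2 * (‖hopf u₁ v₁‖ + ‖hopf u₂ v₂‖) = ‖u₁‖ ^ 2 + ‖v₁‖ ^ 2 + ‖u₂‖ ^ 2 + ‖v₂‖ ^ 2 := by
    rw [norm_hopf, norm_hopf]; ring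
  have hd := norm_hopf_add_hopf_sq u₁ v₁ u₂ v₂
  constructor
  · intro h
    obtain ⟨x, y, hxy, heq⟩ := exists_norm_sq_add_norm_sq_eq_sub hp hd
    exact heq ▸ h x y hxy
  · exact fun h x y hxy => h.trans (sub_le_norm_sq_add_norm_sq (norm_nonneg _) hp hd hxy)

theorem complex_submatrix_bound_iff_spatial_polygon_bound (n : ℕ) (B : ℝ) :
    (∀ A : Matrix (Fin n) (Fin 2) ℂ, Aᴴ * A = 1 →
      ∃ i j : Fin n, i ≠ j ∧
        ∀ u v : ℂ, ‖u‖ ^ 2 + ‖v‖ ^ 2 = 1 →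
          B ^ 2 ≤ ‖A i 0 * u + A i 1 * v‖ ^ 2
            + ‖A j 0 * u + A j 1 * v‖ ^ 2) ↔
    (∀ a : Fin n → EuclideanSpace ℝ (Fin 3), (∑ i, a i = 0) → (∑ i, ‖a i‖ = 1) →
      ∃ i j : Fin n, i ≠ j ∧ B ^ 2 ≤ ‖a i‖ + ‖a j‖ - ‖a i + a j‖) := by
  constructor
  · intro h a hclosed hperimeter
    choose u v huv using fun i => exists_hopf_eq (a i)
    let A : Matrix (Fin n) (Fin 2) ℂ := of fun i => ![u i, v i]
    have hA : ∀ i, hopf (A i 0) (A i 1) = a i := huv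
    obtain ⟨i, j, hij, hmin⟩ := h A <| (conjTranspose_mul_self_eq_one_iff_hopf A).2 <| by
      simpa only [hA] using ⟨hclosed, hperimeter⟩
    exact ⟨i, j, hij, by simpa only [hA] using forall_le_norm_sq_add_norm_sq_iff.1 hmin⟩
  · intro h A hA
    obtain ⟨hclosed, hperimeter⟩ := (conjTranspose_mul_self_eq_one_iff_hopf A).1 hA
    obtain ⟨i, j, hij, hdefect⟩ := h _ hclosed hperimeter
    exact ⟨i, j, hij, forall_le_norm_sq_add_norm_sq_iff.2 hdefect⟩
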